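/- Let n ∈ ℕ, s₀, s₁ : Fin n → 𝔽₂ with s₀ ≠ s₁, x ∈ 𝔽₂, and let ψ be the signed key state. For q ∈ ℕ let Ψ : (Fin q → 𝔽₂ × (Fin n → 𝔽₂)) → ℂ, Ψ(w) = ∏_{j} ψ(w j), be the joint state of q independent copies of ψ. Then the sum of |Ψ(w)|² over all w such that w j ≠ (0, s₀) for every j equals 2^{−q}. (The collusion attack of Section 2.2: a computational-basis measurement of q copies of the single-public-key leased decryption key fails to reveal the secret key s₀ only with probability 2^{−q}; equivalently, the only superposition term not containing s₀ has squared amplitude 2^{−q}.) -/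

import Mathlib

open Finset

noncomputable section

/-- χ(a) ∈ ℂ equals 1 if a = 0 and −1 if a = 1, for a ∈ 𝔽₂. -/
def chi (a : ZMod 2) : ℂ := if a = 0 then 1 else -1

/-- Inner product d·u = ∑ᵢ (d i)·(u i) over 𝔽₂. -/
def dotF2 {n : ℕ} (d u : Fin n → ZMod 2) : ZMod 2 := ∑ i, d i * u i

/-- The signed key state ψ(b, u). -/
def signedKeyState (n : ℕ) (s₀ s₁ : Fin n → ZMod 2) (x : ZMod 2) :
    ZMod 2 × (Fin n → ZMod 2) → ℂ := fun p =>
  (1 / (Real.sqrt 2 : ℂ)) * (if p.1 = 0 ∧ p.2 = s₀ then 1 else 0)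
    + (chi x / (Real.sqrt 2 : ℂ)) * (if p.1 = 1 ∧ p.2 = s₁ then 1 else 0)

lemma abs_chi (x : ZMod 2) : ‖chi x‖ = 1 := by
  unfold chi; split <;> simp

lemma psi_zero {n : ℕ} (s₀ s₁ : Fin n → ZMod 2) (x : ZMod 2)
    (p : ZMod 2 × (Fin n → ZMod 2)) (h0 : p ≠ (0, s₀)) (h1 : p ≠ (1, s₁)) :
    signedKeyState n s₀ s₁ x p = 0 := by
  have h0' : ¬ (p.1 = 0 ∧ p.2 = s₀) := by
    simp [Prod.ext_iff] at h0; tauto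
  have h1' : ¬ (p.1 = 1 ∧ p.2 = s₁) := by
    simp [Prod.ext_iff] at h1; tauto
  simp [signedKeyState, h0', h1']

/-- The collusion attack of Section 2.2: a computational-basis measurement of q
independent copies of the leased decryption key fails to reveal the secret key s₀
only with probability 2^{−q}. -/
theorem collusion_miss_probability (n : ℕ) (s₀ s₁ : Fin n → ZMod 2) (hs : s₀ ≠ s₁)
    (x : ZMod 2) (q : ℕ) :
    ∑ w ∈ Finset.univ.filter
        (fun w : Fin q → ZMod 2 × (Fin n → ZMod 2) => ∀ j, w j ≠ (0, s₀)),
      ‖∏ j, signedKeyState n s₀ s₁ x (w j)‖ ^ 2 = ((2 : ℝ) ^ q)⁻¹ := by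
  rw [Finset.sum_eq_single_of_mem (fun _ => (1, s₁))]
  · have hval : signedKeyState n s₀ s₁ x (1, s₁) = chi x / (Real.sqrt 2 : ℂ) := by
      simp [signedKeyState]
    simp only [hval, Finset.prod_const, Finset.card_univ, Fintype.card_fin]
    rw [norm_pow, norm_div, abs_chi]
    rw [← pow_mul, mul_comm, pow_mul]
    have : (1 / ‖((Real.sqrt 2 : ℝ) : ℂ)‖) ^ 2 = (2 : ℝ)⁻¹ := by
      rw [Complex.norm_of_nonneg (Real.sqrt_nonneg 2)]
      rw [div_pow, Real.sq_sqrt (by norm_num : (2:ℝ) ≥ 0)]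
      norm_num
    rw [this, inv_pow]
  · simp only [Finset.mem_filter, Finset.mem_univ, true_and]
    intro j
    simp [Prod.ext_iff]
  · intro w hw hne
    rw [Finset.mem_filter] at hw
    obtain ⟨j, hj⟩ : ∃ j, w j ≠ (1, s₁) := by
      by_contra h; push_neg at h; exact hne (funext h)
    rw [Finset.prod_eq_zero (f := fun j => signedKeyState n s₀ s₁ x (w j)) (Finset.mem_univ j) (psi_zero s₀ s₁ x _ (hw.2 j) hj)]
    simp

end
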